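/- arXiv:1711.09878 — 5 statements merged into one kernel-verified Lean document; each statement's English description precedes it below -/
import Mathlib

section
/- Let E and F be finite-dimensional real inner product spaces, let f : E → F be a linear map with adjoint f†, and let {β_1, …, β_n} be an orthonormal basis of F consisting of eigenvectors of f ∘ f†, with (f ∘ f†)(β_j) = μ_j² β_j where μ_j ≥ 0. Then the vectors ξ_j := (1 + μ_j²)^{-1/2} · (−f† β_j, β_j), for j = 1, …, n, form an orthonormal basis (with respect to the product inner product on E × F) of the orthogonal complement of the graph subspace Γ(f) = {(x, f x) : x ∈ E}. -/
/-- The vectors `ξ_j := (1 + μ_j²)^{-1/2} • (−f† β_j, β_j)` built from an orthonormal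
eigenbasis of `f ∘ f†` form an orthonormal basis (w.r.t. the product inner product on
`E × F`) of the orthogonal complement of the graph subspace `Γ(f)`. -/
theorem normal_space_orthonormal_basis
    {E F : Type*} [NormedAddCommGroup E] [InnerProductSpace ℝ E]
    [NormedAddCommGroup F] [InnerProductSpace ℝ F]
    [FiniteDimensional ℝ E] [FiniteDimensional ℝ F]
    (f : E →ₗ[ℝ] F) {n : ℕ} (hn : n = Module.finrank ℝ F)
    (β : OrthonormalBasis (Fin n) ℝ F) (mu : Fin n → ℝ)
    (hmu : ∀ j, 0 ≤ mu j)
    (heig : ∀ j, f (LinearMap.adjoint f (β j)) = (mu j ^ 2) • β j)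
    (ξ : Fin n → WithLp 2 (E × F))
    (hξ : ∀ j, ξ j =
      (Real.sqrt (1 + mu j ^ 2))⁻¹ •
        (WithLp.equiv 2 (E × F)).symm (-(LinearMap.adjoint f (β j)), β j)) :
    Orthonormal ℝ ξ ∧
      Submodule.span ℝ (Set.range ξ) =
        ((LinearMap.graph f).comap (WithLp.linearEquiv 2 ℝ (E × F)).toLinearMap)ᗮ := by
  have hpos : ∀ j, (0:ℝ) < 1 + mu j ^ 2 := fun j => by positivity
  have key : ∀ i j, (inner ℝ (ξ i) (ξ j) : ℝ) =
      (Real.sqrt (1 + mu i ^ 2))⁻¹ * ((Real.sqrt (1 + mu j ^ 2))⁻¹ *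
        ((1 + mu j ^ 2) * inner ℝ (β i) (β j))) := by
    intro i j
    rw [hξ i, hξ j, inner_smul_left, inner_smul_right]
    simp only [WithLp.prod_inner_apply, WithLp.equiv_symm_apply, WithLp.ofLp_toLp,
      inner_neg_neg, RCLike.star_def, conj_trivial]
    rw [LinearMap.adjoint_inner_left, heig j, inner_smul_right]
    ring
  have horth : Orthonormal ℝ ξ := by
    rw [orthonormal_iff_ite]
    intro i j
    rw [key i j, orthonormal_iff_ite.mp β.orthonormal]
    by_cases h : i = j
    · subst h
      rw [if_pos rfl]
      have hs : Real.sqrt (1 + mu i ^ 2) * Real.sqrt (1 + mu i ^ 2) = 1 + mu i ^ 2 :=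
        Real.mul_self_sqrt (hpos i).le
      have hne : Real.sqrt (1 + mu i ^ 2) ≠ 0 := by positivity
      field_simp
      nlinarith [hs]
    · rw [if_neg h]
      ring
  refine ⟨horth, ?_⟩
  set G := ((LinearMap.graph f).comap (WithLp.linearEquiv 2 ℝ (E × F)).toLinearMap) with hG
  have hle : Submodule.span ℝ (Set.range ξ) ≤ Gᗮ := by
    rw [Submodule.span_le]
    rintro _ ⟨j, rfl⟩
    intro p hp
    rw [Submodule.mem_comap, LinearMap.mem_graph_iff] at hp
    rw [real_inner_comm, hξ j, inner_smul_left]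
    simp only [WithLp.prod_inner_apply, WithLp.equiv_symm_apply, WithLp.ofLp_toLp,
      inner_neg_left, RCLike.star_def, conj_trivial]
    rw [show p.ofLp.2 = f p.ofLp.1 from hp, LinearMap.adjoint_inner_left]
    ring
  apply Submodule.eq_of_le_of_finrank_eq hle
  have h1 : Module.finrank ℝ (Submodule.span ℝ (Set.range ξ)) = n := by
    rw [finrank_span_eq_card horth.linearIndependent, Fintype.card_fin]
  have h2 : Module.finrank ℝ G = Module.finrank ℝ E := by
    have hmap : G = Submodule.map
        ((WithLp.linearEquiv 2 ℝ (E × F)).symm : (E × F) →ₗ[ℝ] WithLp 2 (E × F))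
        (LinearMap.graph f) :=
      Submodule.comap_equiv_eq_map_symm _ _
    rw [hmap, LinearEquiv.finrank_map_eq, LinearMap.graph_eq_range_prod,
      LinearMap.finrank_range_of_inj]
    intro x y hxy
    exact congrArg Prod.fst hxy
  have h3 : Module.finrank ℝ (WithLp 2 (E × F)) = Module.finrank ℝ E + n := by
    rw [(WithLp.linearEquiv 2 ℝ (E × F)).finrank_eq, Module.finrank_prod, hn]
  have := Submodule.finrank_add_finrank_orthogonal G
  omega
end

section
/- Let E and F be finite-dimensional real inner product spaces, let f : E → F be a linear map with adjoint f†, and let {α_1, …, α_m} be an orthonormal basis of E with (f† ∘ f)(α_i) = λ_i² α_i, λ_i ≥ 0. Define ẽ_i := (1 + λ_i²)^{-1/2} · (α_i, f α_i) ∈ E × F. Then for all i, j one has s(ẽ_i, ẽ_j) = ((1 − λ_i²)/(1 + λ_i²)) δ_ij, where s is the bilinear form s((u,v),(u',v')) = ⟨u,u'⟩_E − ⟨v,v'⟩_F on E × F. -/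
/-- For the tangent frame `ẽ_i = (1 + λ_i²)^{-1/2} • (α_i, f α_i)` of the graph of `f`,
the bilinear form `s((u,v),(u',v')) = ⟨u,u'⟩_E − ⟨v,v'⟩_F` satisfies
`s(ẽ_i, ẽ_j) = ((1 − λ_i²)/(1 + λ_i²)) δ_ij`. -/
theorem s_on_tangent_frame
    {E F : Type*} [NormedAddCommGroup E] [InnerProductSpace ℝ E]
    [NormedAddCommGroup F] [InnerProductSpace ℝ F]
    [FiniteDimensional ℝ E] [FiniteDimensional ℝ F]
    (f : E →ₗ[ℝ] F) {m : ℕ} (hm : m = Module.finrank ℝ E)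
    (α : OrthonormalBasis (Fin m) ℝ E) (lam : Fin m → ℝ)
    (hlam : ∀ i, 0 ≤ lam i)
    (heig : ∀ i, LinearMap.adjoint f (f (α i)) = (lam i ^ 2) • α i)
    (s : (E × F) → (E × F) → ℝ)
    (hs : ∀ u v : E × F, s u v = (inner ℝ u.1 v.1 : ℝ) - (inner ℝ u.2 v.2 : ℝ))
    (etil : Fin m → E × F)
    (hetil : ∀ i, etil i = (Real.sqrt (1 + lam i ^ 2))⁻¹ • (α i, f (α i))) :
    ∀ i j, s (etil i) (etil j) =
      if i = j then (1 - lam i ^ 2) / (1 + lam i ^ 2) else 0 := by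
  intro i j
  have hpos : ∀ k : Fin m, (0:ℝ) < 1 + lam k ^ 2 := fun k => by positivity
  have hff : (inner ℝ (f (α i)) (f (α j)) : ℝ) = (lam j ^ 2) * (inner ℝ (α i) (α j) : ℝ) := by
    rw [← LinearMap.adjoint_inner_right, heig, real_inner_smul_right]
  have hab : (inner ℝ (α i) (α j) : ℝ) = if i = j then 1 else 0 := by
    have := α.orthonormal
    rcases eq_or_ne i j with h | h
    · simp [h, this.1 j, real_inner_self_eq_norm_sq]
    · simp [h, this.2 h]
  rw [hs, hetil i, hetil j]
  simp only [Prod.smul_fst, Prod.smul_snd, real_inner_smul_left, real_inner_smul_right]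
  rw [hff, hab]
  rcases eq_or_ne i j with h | h
  · subst h
    simp only [if_pos rfl]
    have hsq : Real.sqrt (1 + lam i ^ 2) * Real.sqrt (1 + lam i ^ 2) = 1 + lam i ^ 2 :=
      Real.mul_self_sqrt (hpos i).le
    field_simp
    rw [Real.sq_sqrt (hpos i).le]; simp only [if_true, one_mul]; field_simp
  · simp [h]
end

section
/- (Pointwise form of Lemma 4.1.) Let E and F be finite-dimensional real inner product spaces, let f : E → F be a linear map, and let c > 0 be a constant such that ‖f x‖² ≤ c ‖x‖² for all x ∈ E. Then every vector η ∈ E × F orthogonal to the graph subspace Γ(f) = {(x, f x) : x ∈ E} (with respect to the product inner product) satisfies s(η, η) ≤ ((c − 1)/(1 + c)) ‖η‖², where s((u,v),(u',v')) = ⟨u,u'⟩_E − ⟨v,v'⟩_F and ‖η‖ is the norm in E × F. -/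
/-- Pointwise form of Lemma 4.1: if `‖f x‖² ≤ c ‖x‖²` for all `x` (with `c > 0`), then any
vector `η ∈ E × F` orthogonal to the graph of `f` (w.r.t. the product inner product)
satisfies `s(η, η) ≤ ((c − 1)/(1 + c)) ‖η‖²`, where
`s((u,v),(u',v')) = ⟨u,u'⟩_E − ⟨v,v'⟩_F` and `‖η‖² = ‖η.1‖² + ‖η.2‖²`. -/
theorem s_bound_on_normal_vectors
    {E F : Type*} [NormedAddCommGroup E] [InnerProductSpace ℝ E]
    [NormedAddCommGroup F] [InnerProductSpace ℝ F]
    [FiniteDimensional ℝ E] [FiniteDimensional ℝ F]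
    (f : E →ₗ[ℝ] F) (c : ℝ) (hc : 0 < c)
    (hf : ∀ x : E, ‖f x‖ ^ 2 ≤ c * ‖x‖ ^ 2)
    (η : E × F)
    (hη : ∀ x : E, (inner ℝ η.1 x : ℝ) + (inner ℝ η.2 (f x) : ℝ) = 0) :
    (inner ℝ η.1 η.1 : ℝ) - (inner ℝ η.2 η.2 : ℝ) ≤
      (c - 1) / (1 + c) * (‖η.1‖ ^ 2 + ‖η.2‖ ^ 2) := by
  have h1 := hη η.1
  rw [real_inner_self_eq_norm_sq] at h1
  have hcs : |(inner ℝ η.2 (f η.1) : ℝ)| ≤ ‖η.2‖ * ‖f η.1‖ := abs_real_inner_le_norm _ _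
  have h2 : ‖η.1‖ ^ 2 ≤ ‖η.2‖ * ‖f η.1‖ := by
    have : ‖η.1‖ ^ 2 = -(inner ℝ η.2 (f η.1) : ℝ) := by linarith
    rw [this]
    calc -(inner ℝ η.2 (f η.1) : ℝ) ≤ |(inner ℝ η.2 (f η.1) : ℝ)| := neg_le_abs _
      _ ≤ _ := hcs
  have hfu := hf η.1
  have h3 : ‖η.1‖ ^ 2 * ‖η.1‖ ^ 2 ≤ (‖η.2‖ * ‖f η.1‖) * (‖η.2‖ * ‖f η.1‖) :=
    mul_self_le_mul_self (sq_nonneg _) h2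
  have h4 : ‖η.1‖ ^ 2 * ‖η.1‖ ^ 2 ≤ ‖η.2‖ ^ 2 * (c * ‖η.1‖ ^ 2) := by
    nlinarith [mul_le_mul_of_nonneg_left hfu (sq_nonneg ‖η.2‖)]
  have key : ‖η.1‖ ^ 2 ≤ c * ‖η.2‖ ^ 2 := by
    nlinarith [sq_nonneg ‖η.1‖, mul_nonneg hc.le (sq_nonneg ‖η.2‖)]
  rw [real_inner_self_eq_norm_sq, real_inner_self_eq_norm_sq, div_mul_eq_mul_div,
    le_div_iff₀ (by linarith : (0:ℝ) < 1 + c)]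
  nlinarith [key]
end

section
/- Let E and F be finite-dimensional real inner product spaces with dim E = m, let f : E → F be a linear map with adjoint f†, and let λ_1², …, λ_m² be the eigenvalues of f† ∘ f (counted with multiplicity). Then for every basis {e_1, …, e_m} of E that is orthonormal with respect to the inner product g(v,w) := ⟨v,w⟩_E + ⟨f v, f w⟩_F, one has Σ_{k=1}^m (‖e_k‖_E² − ‖f e_k‖_F²) = Σ_{i=1}^m (1 − λ_i²)/(1 + λ_i²). -/
/-- Over any basis `{e_k}` of `E` orthonormal with respect to the graph metric
`g(v,w) = ⟨v,w⟩ + ⟨f v, f w⟩`, the trace `Σ_k (‖e_k‖² − ‖f e_k‖²)` equals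
`Σ_i (1 − λ_i²)/(1 + λ_i²)`, where `λ_i²` are the eigenvalues of `f† ∘ f`
(counted with multiplicity, encoded by an orthonormal eigenbasis). -/
theorem trace_s_formula
    {E F : Type*} [NormedAddCommGroup E] [InnerProductSpace ℝ E]
    [NormedAddCommGroup F] [InnerProductSpace ℝ F]
    [FiniteDimensional ℝ E] [FiniteDimensional ℝ F]
    (f : E →ₗ[ℝ] F) {m : ℕ} (hm : m = Module.finrank ℝ E)
    (α : OrthonormalBasis (Fin m) ℝ E) (lam : Fin m → ℝ)
    (heig : ∀ i, LinearMap.adjoint f (f (α i)) = (lam i ^ 2) • α i)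
    (b : Module.Basis (Fin m) ℝ E)
    (hb : ∀ i j, (inner ℝ (b i) (b j) : ℝ) + (inner ℝ (f (b i)) (f (b j)) : ℝ) =
      if i = j then 1 else 0) :
    ∑ k, (‖b k‖ ^ 2 - ‖f (b k)‖ ^ 2) = ∑ i, (1 - lam i ^ 2) / (1 + lam i ^ 2) := by
  classical
  set T : E →ₗ[ℝ] E := LinearMap.id + (LinearMap.adjoint f).comp f with hT
  have hg : ∀ v w : E, (inner ℝ (T v) w : ℝ) = inner ℝ v w + inner ℝ (f v) (f w) := by
    intro v w
    simp [hT, inner_add_left, LinearMap.adjoint_inner_left]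
  have hpos : ∀ i, (1 : ℝ) + lam i ^ 2 ≠ 0 := fun i => by positivity
  set μ : Fin m → ℝ := fun i => (1 - lam i ^ 2) / (1 + lam i ^ 2) with hμ
  set L : E →ₗ[ℝ] E := α.toBasis.constr ℝ (fun i => μ i • α i) with hL
  have hLα : ∀ i, L (α.toBasis i) = μ i • α i :=
    fun i => α.toBasis.constr_basis ℝ _ i
  have hTL : ∀ v, T (L v) = v - LinearMap.adjoint f (f v) := by
    have : T ∘ₗ L = LinearMap.id - (LinearMap.adjoint f).comp f := by
      apply α.toBasis.ext
      intro i
      have hα : α.toBasis i = α i := by simp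
      have hTα : T (α i) = (1 + lam i ^ 2) • α i := by
        simp only [hT, LinearMap.add_apply, LinearMap.id_apply, LinearMap.comp_apply, heig]
        rw [add_smul, one_smul]
      simp only [LinearMap.comp_apply, LinearMap.sub_apply, LinearMap.id_apply]
      rw [hLα, map_smul, hα, hTα, heig, smul_smul]
      have hmul : μ i * (1 + lam i ^ 2) = 1 - lam i ^ 2 := by
        rw [hμ]; field_simp
      rw [hmul, sub_smul, one_smul]
    intro v
    have := congrArg (fun (M : E →ₗ[ℝ] E) => M v) this
    simpa using this
  -- repr with respect to b via graph inner product
  have hrepr : ∀ (v : E) k, (inner ℝ v (b k) : ℝ) + inner ℝ (f v) (f (b k)) = b.repr v k := by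
    intro v k
    have term : ∀ j, (inner ℝ ((b.repr v j) • b j) (b k) : ℝ) +
        inner ℝ (f ((b.repr v j) • b j)) (f (b k)) =
        (b.repr v j) * (if j = k then 1 else 0) := by
      intro j
      rw [map_smul, real_inner_smul_left, real_inner_smul_left, ← mul_add, hb]
    conv_lhs => rw [← b.sum_repr v]
    rw [map_sum, sum_inner, sum_inner, ← Finset.sum_add_distrib,
      Finset.sum_congr rfl (fun j _ => term j)]
    simp
  -- trace of L in two bases
  have htr1 : LinearMap.trace ℝ E L = ∑ k, b.repr (L (b k)) k := by
    rw [LinearMap.trace_eq_matrix_trace ℝ b L, Matrix.trace]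
    simp [Matrix.diag, LinearMap.toMatrix_apply]
  have htr2 : LinearMap.trace ℝ E L = ∑ i, μ i := by
    rw [LinearMap.trace_eq_matrix_trace ℝ α.toBasis L, Matrix.trace]
    simp only [Matrix.diag, LinearMap.toMatrix_apply, hLα]
    congr 1; ext i
    rw [map_smul]
    simp [OrthonormalBasis.coe_toBasis, OrthonormalBasis.repr_self]
  have key : ∀ k, ‖b k‖ ^ 2 - ‖f (b k)‖ ^ 2 = b.repr (L (b k)) k := by
    intro k
    rw [← hrepr (L (b k)) k, ← hg, hTL]
    rw [inner_sub_left, LinearMap.adjoint_inner_left]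
    rw [real_inner_self_eq_norm_sq, real_inner_self_eq_norm_sq]
  calc ∑ k, (‖b k‖ ^ 2 - ‖f (b k)‖ ^ 2) = ∑ k, b.repr (L (b k)) k := by
        exact Finset.sum_congr rfl (fun k _ => key k)
    _ = LinearMap.trace ℝ E L := htr1.symm
    _ = ∑ i, μ i := htr2
end

section
/- (Computation in the proof of Corollary B.) Let E and F be finite-dimensional real inner product spaces with dim E = m ≥ 1 and dim F = n ≥ 1, and let f : E → F be a linear map. Then for every basis {e_1, …, e_m} of E that is orthonormal with respect to the inner product g(v,w) := ⟨v,w⟩_E + ⟨f v, f w⟩_F, one has Σ_{k=1}^m (‖e_k‖_E² − ‖f e_k‖_F²) > m − 2n. In particular, if 2n ≤ m then Σ_{k=1}^m (‖e_k‖_E² − ‖f e_k‖_F²) > 0. -/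
open Finset

private lemma key_Sj_lt_one
    {E F : Type*} [NormedAddCommGroup E] [InnerProductSpace ℝ E]
    [NormedAddCommGroup F] [InnerProductSpace ℝ F]
    {m : ℕ} (f : E →ₗ[ℝ] F) (b : Module.Basis (Fin m) ℝ E)
    (hb : ∀ i j, (inner ℝ (b i) (b j) : ℝ) + (inner ℝ (f (b i)) (f (b j)) : ℝ) =
      if i = j then 1 else 0)
    (c : F) (hc : ‖c‖ = 1) :
    ∑ k, (inner ℝ (f (b k)) c : ℝ) ^ 2 < 1 := by
  set a : Fin m → ℝ := fun k => (inner ℝ (f (b k)) c : ℝ) with ha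
  set S : ℝ := ∑ k, (a k) ^ 2 with hS
  set u : E := ∑ k, a k • b k with hu
  have hSnn : 0 ≤ S := Finset.sum_nonneg fun k _ => sq_nonneg _
  -- g(u,u) = S
  have hg : (inner ℝ u u : ℝ) + (inner ℝ (f u) (f u) : ℝ) = S := by
    have h1 : (inner ℝ u u : ℝ) = ∑ k, ∑ l, a k * a l * (inner ℝ (b k) (b l) : ℝ) := by
      simp only [hu, inner_sum, sum_inner, real_inner_smul_left, real_inner_smul_right]
      exact Finset.sum_congr rfl fun k _ => Finset.sum_congr rfl fun l _ => by
        rw [real_inner_comm]; ring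
    have h2 : (inner ℝ (f u) (f u) : ℝ) =
        ∑ k, ∑ l, a k * a l * (inner ℝ (f (b k)) (f (b l)) : ℝ) := by
      simp only [hu, map_sum, map_smul, inner_sum, sum_inner, real_inner_smul_left,
        real_inner_smul_right]
      exact Finset.sum_congr rfl fun k _ => Finset.sum_congr rfl fun l _ => by
        rw [real_inner_comm]; ring
    rw [h1, h2, ← Finset.sum_add_distrib, hS]
    refine Finset.sum_congr rfl fun k _ => ?_
    rw [← Finset.sum_add_distrib]
    have hterm : ∀ l, a k * a l * (inner ℝ (b k) (b l) : ℝ)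
        + a k * a l * (inner ℝ (f (b k)) (f (b l)) : ℝ)
        = a k * a l * (if k = l then 1 else 0) := by
      intro l; rw [← mul_add, hb]
    simp only [hterm]
    simp [sq]
  -- ⟨f u, c⟩ = S
  have hfu : (inner ℝ (f u) c : ℝ) = S := by
    simp only [hu, map_sum, map_smul, sum_inner, real_inner_smul_left, hS]
    exact Finset.sum_congr rfl fun k _ => by rw [sq]
  -- Cauchy-Schwarz: S² ≤ ‖f u‖²
  have hcs : S ^ 2 ≤ ‖f u‖ ^ 2 := by
    have h := abs_real_inner_le_norm (f u) c
    rw [hfu, hc, mul_one] at h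
    calc S ^ 2 = |S| ^ 2 := by rw [sq_abs]
    _ ≤ ‖f u‖ ^ 2 := by
        apply pow_le_pow_left₀ (abs_nonneg _) h
  have hnu : ‖f u‖ ^ 2 = S - ‖u‖ ^ 2 := by
    rw [real_inner_self_eq_norm_sq, real_inner_self_eq_norm_sq] at hg
    linarith
  by_contra hS1
  push_neg at hS1
  have hu0' : u = 0 := by
    have h1 : ‖u‖ ^ 2 ≤ 0 := by nlinarith
    have : ‖u‖ = 0 := by nlinarith [norm_nonneg u, sq_nonneg ‖u‖]
    exact norm_eq_zero.mp this
  have ha0 : ∀ k, a k = 0 := by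
    intro k
    have hra : b.repr u k = a k := by
      rw [hu]
      have := b.repr_sum_self a
      exact congrFun this k
    rw [← hra, hu0']
    simp
  have : S = 0 := by rw [hS]; exact Finset.sum_eq_zero fun k _ => by rw [ha0 k]; ring
  linarith

/-- Computation in the proof of Corollary B: for `dim E = m ≥ 1`, `dim F = n ≥ 1` and any
basis `{e_k}` of `E` orthonormal w.r.t. `g(v,w) = ⟨v,w⟩ + ⟨f v, f w⟩`, the trace
`Σ_k (‖e_k‖² − ‖f e_k‖²)` is strictly greater than `m − 2n`; in particular it is
positive when `2n ≤ m`. -/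
theorem trace_s_gt_of_dims
    {E F : Type*} [NormedAddCommGroup E] [InnerProductSpace ℝ E]
    [NormedAddCommGroup F] [InnerProductSpace ℝ F]
    [FiniteDimensional ℝ E] [FiniteDimensional ℝ F]
    (f : E →ₗ[ℝ] F)
    (hm : 1 ≤ Module.finrank ℝ E) (hn : 1 ≤ Module.finrank ℝ F)
    (b : Module.Basis (Fin (Module.finrank ℝ E)) ℝ E)
    (hb : ∀ i j, (inner ℝ (b i) (b j) : ℝ) + (inner ℝ (f (b i)) (f (b j)) : ℝ) =
      if i = j then 1 else 0) :
    ∑ k, (‖b k‖ ^ 2 - ‖f (b k)‖ ^ 2) >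
        (Module.finrank ℝ E : ℝ) - 2 * (Module.finrank ℝ F : ℝ) ∧
      (2 * Module.finrank ℝ F ≤ Module.finrank ℝ E →
        ∑ k, (‖b k‖ ^ 2 - ‖f (b k)‖ ^ 2) > 0) := by
  haveI : Nonempty (Fin (Module.finrank ℝ F)) := ⟨⟨0, hn⟩⟩
  let c : OrthonormalBasis (Fin (Module.finrank ℝ F)) ℝ F := stdOrthonormalBasis ℝ F
  have hexp : ∀ k, ‖f (b k)‖ ^ 2 = ∑ j, (inner ℝ (f (b k)) (c j) : ℝ) ^ 2 := by
    intro k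
    have h := c.sum_inner_mul_inner (f (b k)) (f (b k))
    rw [real_inner_self_eq_norm_sq] at h
    rw [← h]
    exact Finset.sum_congr rfl fun j _ => by rw [sq, real_inner_comm (c j) (f (b k))]
  have hsum : ∑ k, ‖f (b k)‖ ^ 2 < (Module.finrank ℝ F : ℝ) := by
    calc ∑ k, ‖f (b k)‖ ^ 2 = ∑ j, ∑ k, (inner ℝ (f (b k)) (c j) : ℝ) ^ 2 := by
          rw [← Finset.sum_comm]; exact Finset.sum_congr rfl fun k _ => hexp k
    _ < ∑ _j : Fin (Module.finrank ℝ F), (1 : ℝ) := by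
          refine Finset.sum_lt_sum_of_nonempty Finset.univ_nonempty fun j _ => ?_
          exact key_Sj_lt_one f b hb (c j) (c.orthonormal.1 j)
    _ = (Module.finrank ℝ F : ℝ) := by simp
  have hdiag : ∀ k, ‖b k‖ ^ 2 - ‖f (b k)‖ ^ 2 = 1 - 2 * ‖f (b k)‖ ^ 2 := by
    intro k
    have h := hb k k
    rw [if_pos rfl, real_inner_self_eq_norm_sq, real_inner_self_eq_norm_sq] at h
    linarith
  have htotal : ∑ k, (‖b k‖ ^ 2 - ‖f (b k)‖ ^ 2)
      = (Module.finrank ℝ E : ℝ) - 2 * ∑ k, ‖f (b k)‖ ^ 2 := by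
    rw [Finset.sum_congr rfl fun k _ => hdiag k, Finset.sum_sub_distrib,
      ← Finset.mul_sum]
    simp
  constructor
  · rw [htotal]; linarith
  · intro h2n
    rw [htotal]
    have hcast : (2 * Module.finrank ℝ F : ℝ) ≤ (Module.finrank ℝ E : ℝ) := by
      exact_mod_cast h2n
    linarith
end
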